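/- The 20 vectors of the tripartite set U = ∪_{i=1}^6 (A_i \ {ψ_i(0,0)}) ∪ {|S⟩} in ℂ^3 ⊗ ℂ^3 ⊗ ℂ^3 are pairwise orthogonal nonzero product states. -/
import Mathlib


noncomputable section


noncomputable section

def ket (i : Fin 3) : Fin 3 → ℂ := fun j => if j = i then 1 else 0
def η (s : Fin 2) : Fin 3 → ℂ := ket 0 + ((-1 : ℂ) ^ (s : ℕ)) • ket 1
def ξ (s : Fin 2) : Fin 3 → ℂ := ket 1 + ((-1 : ℂ) ^ (s : ℕ)) • ket 2

/-- Component of the tile OPB families A₁,…,A₆ of ℂ³⊗ℂ³⊗ℂ³ on party A. -/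
def fA : Fin 6 → Fin 2 → Fin 2 → (Fin 3 → ℂ)
  | 0, i, _ => ξ i | 1, i, _ => ξ i | 2, _, _ => ket 2
  | 3, i, _ => η i | 4, i, _ => η i | 5, _, _ => ket 0

/-- Component on party B. -/
def fB : Fin 6 → Fin 2 → Fin 2 → (Fin 3 → ℂ)
  | 0, _, _ => ket 0 | 1, _, j => η j | 2, i, _ => ξ i
  | 3, _, _ => ket 2 | 4, _, j => ξ j | 5, i, _ => η i

/-- Component on party C. -/
def fC : Fin 6 → Fin 2 → Fin 2 → (Fin 3 → ℂ)
  | 0, _, j => η j | 1, _, _ => ket 2 | 2, _, j => η j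
  | 3, _, j => ξ j | 4, _, _ => ket 0 | 5, _, j => ξ j

/-- The element ψ_f(i,j) of family A_{f+1} in ℂ³⊗ℂ³⊗ℂ³. -/
def tri (f : Fin 6) (i j : Fin 2) : Fin 3 × Fin 3 × Fin 3 → ℂ :=
  fun x => fA f i j x.1 * fB f i j x.2.1 * fC f i j x.2.2

/-- The stopper state (|0⟩+|1⟩+|2⟩)^{⊗3}. -/
def stopper : Fin 3 × Fin 3 × Fin 3 → ℂ := fun _ => 1

/-- The UPB U = ∪ᵢ(Aᵢ \ {ψᵢ(0,0)}) ∪ {|S⟩} of Eq. (14). -/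
def Uset : Set (Fin 3 × Fin 3 × Fin 3 → ℂ) :=
  {x | ∃ f i j, ¬(i = 0 ∧ j = 0) ∧ x = tri f i j} ∪ {stopper}

/-! ### Integer-valued mirrors -/

def ketZ (i : Fin 3) : Fin 3 → ℤ := fun j => if j = i then 1 else 0
def ηZ (s : Fin 2) : Fin 3 → ℤ := ketZ 0 + ((-1 : ℤ) ^ (s : ℕ)) • ketZ 1
def ξZ (s : Fin 2) : Fin 3 → ℤ := ketZ 1 + ((-1 : ℤ) ^ (s : ℕ)) • ketZ 2
def fAZ : Fin 6 → Fin 2 → Fin 2 → (Fin 3 → ℤ)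
  | 0, i, _ => ξZ i | 1, i, _ => ξZ i | 2, _, _ => ketZ 2
  | 3, i, _ => ηZ i | 4, i, _ => ηZ i | 5, _, _ => ketZ 0
def fBZ : Fin 6 → Fin 2 → Fin 2 → (Fin 3 → ℤ)
  | 0, _, _ => ketZ 0 | 1, _, j => ηZ j | 2, i, _ => ξZ i
  | 3, _, _ => ketZ 2 | 4, _, j => ξZ j | 5, i, _ => ηZ i
def fCZ : Fin 6 → Fin 2 → Fin 2 → (Fin 3 → ℤ)
  | 0, _, j => ηZ j | 1, _, _ => ketZ 2 | 2, _, j => ηZ j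
  | 3, _, j => ξZ j | 4, _, _ => ketZ 0 | 5, _, j => ξZ j
def triZ (f : Fin 6) (i j : Fin 2) : Fin 3 × Fin 3 × Fin 3 → ℤ :=
  fun x => fAZ f i j x.1 * fBZ f i j x.2.1 * fCZ f i j x.2.2

lemma ket_cast (i x : Fin 3) : ket i x = ((ketZ i x : ℤ) : ℂ) := by
  simp [ket, ketZ, apply_ite (fun n : ℤ => (n : ℂ))]

lemma η_cast (s : Fin 2) (x : Fin 3) : η s x = ((ηZ s x : ℤ) : ℂ) := by
  simp [η, ηZ, ket_cast]

lemma ξ_cast (s : Fin 2) (x : Fin 3) : ξ s x = ((ξZ s x : ℤ) : ℂ) := by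
  simp [ξ, ξZ, ket_cast]

lemma fA_cast (f : Fin 6) (i j : Fin 2) (x : Fin 3) : fA f i j x = ((fAZ f i j x : ℤ) : ℂ) := by
  fin_cases f <;> simp [fA, fAZ, ket_cast, η_cast, ξ_cast]

lemma fB_cast (f : Fin 6) (i j : Fin 2) (x : Fin 3) : fB f i j x = ((fBZ f i j x : ℤ) : ℂ) := by
  fin_cases f <;> simp [fB, fBZ, ket_cast, η_cast, ξ_cast]

lemma fC_cast (f : Fin 6) (i j : Fin 2) (x : Fin 3) : fC f i j x = ((fCZ f i j x : ℤ) : ℂ) := by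
  fin_cases f <;> simp [fC, fCZ, ket_cast, η_cast, ξ_cast]

lemma tri_cast (f : Fin 6) (i j : Fin 2) (t : Fin 3 × Fin 3 × Fin 3) :
    tri f i j t = ((triZ f i j t : ℤ) : ℂ) := by
  simp [tri, triZ, fA_cast, fB_cast, fC_cast]

lemma ip_tri (f : Fin 6) (i j : Fin 2) (g : Fin 6) (k l : Fin 2) :
    ∑ t : Fin 3 × Fin 3 × Fin 3, (starRingEnd ℂ) (tri f i j t) * tri g k l t
      = ((∑ t : Fin 3 × Fin 3 × Fin 3, triZ f i j t * triZ g k l t : ℤ) : ℂ) := by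
  push_cast
  refine Finset.sum_congr rfl fun t _ => ?_
  simp [tri_cast]

lemma ip_stop_tri (f : Fin 6) (i j : Fin 2) :
    ∑ t : Fin 3 × Fin 3 × Fin 3, (starRingEnd ℂ) (stopper t) * tri f i j t
      = ((∑ t : Fin 3 × Fin 3 × Fin 3, triZ f i j t : ℤ) : ℂ) := by
  push_cast
  refine Finset.sum_congr rfl fun t _ => ?_
  simp [stopper, tri_cast]

lemma ip_tri_stop (f : Fin 6) (i j : Fin 2) :
    ∑ t : Fin 3 × Fin 3 × Fin 3, (starRingEnd ℂ) (tri f i j t) * stopper t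
      = ((∑ t : Fin 3 × Fin 3 × Fin 3, triZ f i j t : ℤ) : ℂ) := by
  push_cast
  refine Finset.sum_congr rfl fun t _ => ?_
  simp [stopper, tri_cast]

lemma zorth : ∀ f i j g k l, ¬(i = 0 ∧ j = 0) → ¬(k = 0 ∧ l = 0) → (f, i, j) ≠ (g, k, l) →
    ∑ t : Fin 3 × Fin 3 × Fin 3, triZ f i j t * triZ g k l t = 0 := by decide

lemma zself : ∀ f i j, ∑ t : Fin 3 × Fin 3 × Fin 3, triZ f i j t * triZ f i j t ≠ 0 := by decide

lemma zstop : ∀ f i j, ¬(i = 0 ∧ j = 0) → ∑ t : Fin 3 × Fin 3 × Fin 3, triZ f i j t = 0 := by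
  decide

/-- Self inner product of `tri` is nonzero. -/
lemma self_ne (f : Fin 6) (i j : Fin 2) :
    ∑ t : Fin 3 × Fin 3 × Fin 3, (starRingEnd ℂ) (tri f i j t) * tri f i j t ≠ 0 := by
  rw [ip_tri]
  exact_mod_cast zself f i j

lemma tri_ne_zero (f : Fin 6) (i j : Fin 2) : tri f i j ≠ 0 := by
  intro h
  apply self_ne f i j
  simp [h]

lemma tri_ne_stopper (f : Fin 6) (i j : Fin 2) (h : ¬(i = 0 ∧ j = 0)) :
    tri f i j ≠ stopper := by
  intro he
  apply self_ne f i j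
  nth_rewrite 2 [he]
  rw [ip_tri_stop, zstop f i j h, Int.cast_zero]

lemma tri_inj (f : Fin 6) (i j : Fin 2) (g : Fin 6) (k l : Fin 2)
    (hij : ¬(i = 0 ∧ j = 0)) (hkl : ¬(k = 0 ∧ l = 0)) (h : tri f i j = tri g k l) :
    (f, i, j) = (g, k, l) := by
  by_contra hne
  apply self_ne f i j
  nth_rewrite 2 [h]
  rw [ip_tri, zorth f i j g k l hij hkl hne, Int.cast_zero]

/-- The parameter type of `Uset`. -/
def Ty := {p : Fin 6 × Fin 2 × Fin 2 // ¬(p.2.1 = 0 ∧ p.2.2 = 0)} ⊕ Unit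

instance : Fintype Ty := by unfold Ty; infer_instance

def gU : Ty → (Fin 3 × Fin 3 × Fin 3 → ℂ)
  | Sum.inl p => tri p.1.1 p.1.2.1 p.1.2.2
  | Sum.inr _ => stopper

lemma gU_inj : Function.Injective gU := by
  rintro (⟨⟨f, i, j⟩, hp⟩ | ⟨⟩) (⟨⟨g, k, l⟩, hq⟩ | ⟨⟩) h
  · have := tri_inj f i j g k l hp hq h
    simp only [Prod.mk.injEq] at this
    obtain ⟨rfl, rfl, rfl⟩ := this
    rfl
  · exact absurd h (tri_ne_stopper f i j hp)
  · exact absurd h.symm (tri_ne_stopper g k l hq)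
  · rfl

lemma Uset_eq_range : Uset = Set.range gU := by
  ext x
  constructor
  · rintro (⟨f, i, j, h, rfl⟩ | h)
    · exact ⟨Sum.inl ⟨(f, i, j), h⟩, rfl⟩
    · exact ⟨Sum.inr (), h.symm⟩
  · rintro ⟨(⟨⟨f, i, j⟩, hp⟩ | ⟨⟩), rfl⟩
    · exact Or.inl ⟨f, i, j, hp, rfl⟩
    · exact Or.inr rfl

/-- The vectors of U are pairwise orthogonal nonzero product states,
and there are 19 of them. -/
theorem stmt_9 :
    (∀ x ∈ Uset, x ≠ 0) ∧
    (∀ x ∈ Uset, ∃ u v w : Fin 3 → ℂ, x = fun t => u t.1 * v t.2.1 * w t.2.2) ∧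
    (∀ x ∈ Uset, ∀ y ∈ Uset, x ≠ y →
      ∑ t : Fin 3 × Fin 3 × Fin 3, (starRingEnd ℂ) (x t) * y t = 0) ∧
    Set.ncard Uset = 19 := by
  refine ⟨?_, ?_, ?_, ?_⟩
  · rintro x (⟨f, i, j, h, rfl⟩ | h)
    · exact tri_ne_zero f i j
    · rw [Set.mem_singleton_iff] at h
      subst h
      intro h0
      have := congrFun h0 (0, 0, 0)
      simp [stopper] at this
  · rintro x (⟨f, i, j, h, rfl⟩ | h)
    · exact ⟨fA f i j, fB f i j, fC f i j, rfl⟩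
    · rw [Set.mem_singleton_iff] at h
      subst h
      exact ⟨fun _ => 1, fun _ => 1, fun _ => 1, by funext t; simp [stopper]⟩
  · rintro x (⟨f, i, j, hij, rfl⟩ | hx) y (⟨g, k, l, hkl, rfl⟩ | hy) hne
    · rw [ip_tri, zorth f i j g k l hij hkl, Int.cast_zero]
      intro h
      exact hne (by rw [show f = g from congrArg Prod.fst h,
        show i = k by simpa using congrArg (fun p => p.2.1) h,
        show j = l by simpa using congrArg (fun p => p.2.2) h])
    · rw [Set.mem_singleton_iff] at hy; subst hy
      rw [ip_tri_stop, zstop f i j hij, Int.cast_zero]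
    · rw [Set.mem_singleton_iff] at hx; subst hx
      rw [ip_stop_tri, zstop g k l hkl, Int.cast_zero]
    · rw [Set.mem_singleton_iff] at hx hy
      exact absurd (hx.trans hy.symm) hne
  · rw [Uset_eq_range, Set.ncard_eq_toFinset_card', Set.toFinset_range,
      Finset.card_image_of_injective _ gU_inj]
    simp only [Finset.card_univ]
    rw [show Fintype.card Ty = 19 from by unfold Ty; decide]

end
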